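/- The inversion formula x^n = (q;q)_{n,α} ∑_{k=0}^{⌊n/2⌋} q^{-2nk+3k²} y^k h̃_{n-2k,α}(x,y|q) / ((q²;q²)_k (q;q)_{n-2k}) holds for all n ≥ 0 and all real x, y. -/

import Mathlib

/-!
Expanding each `h̃_{n-2k}` turns the right-hand side into a double sum over `(k, j)`. Grouping the
terms with `k + j = l`, the exponents of `q` combine to the monomial of `x^{n-2l} y^l` times
`∑_{k+j=l} (-1)^k (q²)^{k(k-1)/2} / ((q²;q²)_k (q²;q²)_j) = (1; q²)_l / (q²;q²)_l`
(Cauchy's `q`-binomial theorem), which vanishes unless `l = 0`; the `l = 0` term is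
`x^n / (q;q)_{n,α}`.
-/

open Finset

/-- q-shifted factorial (a;Q)_n with base Q -/
noncomputable def qPochGen (Q a : ℝ) (n : ℕ) : ℝ := ∏ j ∈ Finset.range n, (1 - a * Q ^ j)

/-- (q;q)_n -/
noncomputable def qPoch (q : ℝ) (n : ℕ) : ℝ := qPochGen q q n

/-- generalized q-shifted factorial (q;q)_{n,α}, via splitting formulas -/
noncomputable def gqPoch (q α : ℝ) (n : ℕ) : ℝ :=
  qPochGen (q ^ 2) (q ^ 2) (n / 2) * qPochGen (q ^ 2) (Real.rpow q (2 * α + 2)) (n / 2 + n % 2)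

/-- generalized discrete q-Hermite II polynomials -/
noncomputable def hTilde (q α x y : ℝ) (n : ℕ) : ℝ :=
  qPoch q n * ∑ k ∈ Finset.range (n / 2 + 1),
    (-1 : ℝ) ^ k * q ^ (-2 * (n : ℤ) * (k : ℤ) + (k : ℤ) * (2 * (k : ℤ) + 1)) *
      x ^ (n - 2 * k) * y ^ k / (gqPoch q α (n - 2 * k) * qPoch (q ^ 2) k)

lemma qPoch_zero (Q : ℝ) : qPoch Q 0 = 1 := by
  simp [qPoch, qPochGen]

lemma qPoch_succ (Q : ℝ) (n : ℕ) : qPoch Q (n + 1) = qPoch Q n * (1 - Q ^ (n + 1)) := by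
  rw [qPoch, qPochGen, prod_range_succ, ← pow_succ']; rfl

lemma qPochGen_pos {Q a : ℝ} (hQ0 : 0 ≤ Q) (hQ1 : Q ≤ 1) (ha : a < 1) (n : ℕ) :
    0 < qPochGen Q a n := by
  refine prod_pos fun j _ => ?_
  have hQj : Q ^ j ≤ 1 := pow_le_one₀ hQ0 hQ1
  have := pow_nonneg hQ0 j
  rcases le_total a 0 with h | h <;> nlinarith

lemma qPoch_pos {Q : ℝ} (hQ0 : 0 ≤ Q) (hQ1 : Q < 1) (n : ℕ) : 0 < qPoch Q n :=
  qPochGen_pos hQ0 hQ1.le hQ1 n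

lemma gqPoch_pos {q α : ℝ} (hq0 : 0 < q) (hq1 : q < 1) (hα : -1 < α) (n : ℕ) :
    0 < gqPoch q α n := by
  have hq2 : q ^ 2 < 1 := pow_lt_one₀ hq0.le hq1 two_ne_zero
  have hr : Real.rpow q (2 * α + 2) < 1 := Real.rpow_lt_one hq0.le hq1 (by linarith)
  exact mul_pos (qPoch_pos (by positivity) hq2 _) (qPochGen_pos (by positivity) hq2.le hr _)

noncomputable def qBinomialTerm (Q : ℝ) (i j : ℕ) : ℝ :=
  (-1) ^ i * Q ^ i.choose 2 / (qPoch Q i * qPoch Q j)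

-- Cauchy's `q`-binomial theorem `∑ (-1)^i Q^(i choose 2) [l, i]_Q z^i = (z; Q)_l` at `z = 1`.
theorem sum_antidiagonal_qBinomialTerm_eq_zero {Q : ℝ} (hQ : ∀ m, qPoch Q m ≠ 0) (l : ℕ) :
    ∑ p ∈ antidiagonal (l + 1), qBinomialTerm Q p.1 p.2 = 0 := by
  have hfac : ∀ m, 1 - Q ^ (m + 1) ≠ 0 := fun m =>
    right_ne_zero_of_mul (qPoch_succ Q m ▸ hQ (m + 1))
  set h : ℕ × ℕ → ℝ := fun p => (-1) ^ p.1 * Q ^ (p.1 + 1).choose 2 / (qPoch Q p.1 * qPoch Q p.2)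
  have hlower : ∀ p : ℕ × ℕ, (1 - Q ^ (p.1 + 1)) * qBinomialTerm Q (p.1 + 1) p.2 = -h p := by
    intro p
    have := hQ p.1; have := hQ p.2; have := hfac p.1
    simp only [qBinomialTerm, h, qPoch_succ]
    field_simp
    ring
  have hupper : ∀ p : ℕ × ℕ,
      Q ^ p.1 * (1 - Q ^ (p.2 + 1)) * qBinomialTerm Q p.1 (p.2 + 1) = h p := by
    intro p
    have := hQ p.1; have := hQ p.2; have := hfac p.2
    simp only [qBinomialTerm, h, qPoch_succ, Nat.choose_succ_succ', Nat.choose_one_right]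
    field_simp
    ring
  -- `1 - Q^(i+j) = (1 - Q^i) + Q^i (1 - Q^j)`; the two halves telescope to `∓ ∑ h` over
  -- `antidiagonal l`.
  have hsplit : ∀ p ∈ antidiagonal (l + 1), (1 - Q ^ (l + 1)) * qBinomialTerm Q p.1 p.2 =
      (1 - Q ^ p.1) * qBinomialTerm Q p.1 p.2 +
        Q ^ p.1 * (1 - Q ^ p.2) * qBinomialTerm Q p.1 p.2 := by
    intro p hp
    rw [← mem_antidiagonal.mp hp, pow_add]
    ring
  suffices (1 - Q ^ (l + 1)) * ∑ p ∈ antidiagonal (l + 1), qBinomialTerm Q p.1 p.2 = 0 from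
    (mul_eq_zero.mp this).resolve_left (hfac l)
  rw [mul_sum, sum_congr rfl hsplit, sum_add_distrib, Nat.sum_antidiagonal_succ,
    Nat.sum_antidiagonal_succ']
  simp only [hlower, hupper, pow_zero, sub_self, zero_mul, mul_zero, zero_add, sum_neg_distrib,
    neg_add_cancel]

noncomputable def inversionMonomial (q α x y : ℝ) (n l : ℕ) : ℝ :=
  (-1) ^ l * q ^ (-2 * (n : ℤ) * l + 2 * (l : ℤ) ^ 2 + l) * x ^ (n - 2 * l) * y ^ l /
    gqPoch q α (n - 2 * l)

lemma zpow_mul_zpow_eq_zpow_mul_sq_pow_choose {q : ℝ} (hq : q ≠ 0) (n : ℤ) (k j : ℕ) :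
    q ^ (-2 * n * k + 3 * (k : ℤ) ^ 2) * q ^ (-2 * (n - 2 * k) * j + (j : ℤ) * (2 * j + 1)) =
      q ^ (-2 * n * (k + j) + 2 * ((k : ℤ) + j) ^ 2 + (k + j)) * (q ^ 2) ^ k.choose 2 := by
  have hchoose : ((2 * k.choose 2 : ℕ) : ℤ) = k * (k - 1) := by
    have : 2 * (k.choose 2 : ℚ) = k * (k - 1) := by rw [Nat.cast_choose_two]; ring
    exact_mod_cast this
  rw [← pow_mul, ← zpow_natCast, hchoose, ← zpow_add₀ hq, ← zpow_add₀ hq]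
  ring_nf

lemma hTilde_summand_eq {q : ℝ} (hq : q ≠ 0) (α x y : ℝ) {n k j : ℕ} (h : 2 * (k + j) ≤ n)
    (hP : qPoch q (n - 2 * k) ≠ 0) :
    q ^ (-2 * (n : ℤ) * k + 3 * (k : ℤ) ^ 2) * y ^ k *
        (qPoch q (n - 2 * k) *
          ((-1 : ℝ) ^ j * q ^ (-2 * ((n - 2 * k : ℕ) : ℤ) * j + (j : ℤ) * (2 * j + 1)) *
            x ^ (n - 2 * k - 2 * j) * y ^ j /
            (gqPoch q α (n - 2 * k - 2 * j) * qPoch (q ^ 2) j))) /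
        (qPoch (q ^ 2) k * qPoch q (n - 2 * k)) =
      inversionMonomial q α x y n (k + j) * qBinomialTerm (q ^ 2) k j := by
  have hsign : (-1 : ℝ) ^ j = (-1) ^ (k + j) * (-1) ^ k := by
    rw [pow_add, mul_right_comm, ← mul_pow, neg_one_mul, neg_neg, one_pow, one_mul]
  rw [show n - 2 * k - 2 * j = n - 2 * (k + j) by omega, Nat.cast_sub (by omega), hsign,
    inversionMonomial, qBinomialTerm]
  push_cast
  have hpow := zpow_mul_zpow_eq_zpow_mul_sq_pow_choose hq n k j
  field_simp
  linear_combination x ^ (n - 2 * (k + j)) * y ^ (k + j) /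
    (gqPoch q α (n - 2 * (k + j)) * qPoch (q ^ 2) j * qPoch (q ^ 2) k) * hpow

lemma hTilde_weighted_eq_sum {q : ℝ} (hq : q ≠ 0) (α x y : ℝ) {n k : ℕ} (hk : k ≤ n / 2)
    (hP : qPoch q (n - 2 * k) ≠ 0) :
    q ^ (-2 * (n : ℤ) * k + 3 * (k : ℤ) ^ 2) * y ^ k * hTilde q α x y (n - 2 * k) /
        (qPoch (q ^ 2) k * qPoch q (n - 2 * k)) =
      ∑ j ∈ range (n / 2 + 1 - k),
        inversionMonomial q α x y n (k + j) * qBinomialTerm (q ^ 2) k j := by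
  rw [hTilde, show (n - 2 * k) / 2 + 1 = n / 2 + 1 - k by omega, mul_sum, mul_sum, sum_div]
  exact sum_congr rfl fun j hj => hTilde_summand_eq hq α x y (by have := mem_range.mp hj; omega) hP

theorem hTilde_inversion_formula (q α x y : ℝ) (hq : 0 < q) (hq1 : q < 1)
    (hα : -1 < α) (n : ℕ) :
    x ^ n =
      gqPoch q α n * ∑ k ∈ Finset.range (n / 2 + 1),
        q ^ (-2 * (n : ℤ) * (k : ℤ) + 3 * (k : ℤ) ^ 2) * y ^ k *
          hTilde q α x y (n - 2 * k) / (qPoch (q ^ 2) k * qPoch q (n - 2 * k)) := by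
  have hQ : ∀ m, qPoch (q ^ 2) m ≠ 0 := fun m =>
    (qPoch_pos (by positivity) (pow_lt_one₀ hq.le hq1 two_ne_zero) m).ne'
  set F : ℕ → ℕ → ℝ := fun k j => inversionMonomial q α x y n (k + j) * qBinomialTerm (q ^ 2) k j
  have hdiag : ∀ m, ∑ k ∈ range (m + 1), F k (m - k) =
      inversionMonomial q α x y n m * ∑ p ∈ antidiagonal m, qBinomialTerm (q ^ 2) p.1 p.2 := by
    intro m
    rw [← Nat.sum_antidiagonal_eq_sum_range_succ F, mul_sum]
    exact sum_congr rfl fun p hp => by rw [← mem_antidiagonal.mp hp]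
  have hbase : inversionMonomial q α x y n 0 * ∑ p ∈ antidiagonal 0, qBinomialTerm (q ^ 2) p.1 p.2 =
      x ^ n / gqPoch q α n := by
    simp [inversionMonomial, qBinomialTerm, qPoch_zero]
  rw [sum_congr rfl fun k hk => hTilde_weighted_eq_sum hq.ne' α x y
      (Nat.lt_succ_iff.mp (mem_range.mp hk)) (qPoch_pos hq.le hq1 _).ne',
    ← sum_range_diag_flip, sum_congr rfl fun m _ => hdiag m, sum_range_succ',
    sum_congr rfl fun m _ => by rw [sum_antidiagonal_qBinomialTerm_eq_zero hQ, mul_zero],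
    sum_const_zero, zero_add, hbase, mul_div_cancel₀ _ (gqPoch_pos hq hq1 hα n).ne']
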